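/- Let C be a category with a factorization system (E, M), let T be a monad on C whose underlying functor preserves morphisms in E, and let U : C^T → C be the forgetful functor from the Eilenberg–Moore category. Then the pair (Ē, M̄), where Ē = {f in C^T : U f ∈ E} and M̄ = {f in C^T : U f ∈ M}, is a factorization system on C^T. -/
import Mathlib


open CategoryTheory

universe v u

/-- `e` is left orthogonal to `m`: every commutative square admits a unique diagonal filler. -/
def LeftOrth {C : Type u} [Category.{v} C] {A B X Y : C} (e : A ⟶ B) (m : X ⟶ Y) : Prop :=
  ∀ (f : A ⟶ X) (g : B ⟶ Y), e ≫ g = f ≫ m → ∃! t : B ⟶ X, e ≫ t = f ∧ t ≫ m = g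

/-- A factorization system `(E, M)` on a category `C`. -/
structure FactorizationSystem (C : Type u) [Category.{v} C] where
  E : MorphismProperty C
  M : MorphismProperty C
  factor : ∀ {X Y : C} (f : X ⟶ Y),
    ∃ (Z : C) (e : X ⟶ Z) (m : Z ⟶ Y), E e ∧ M m ∧ e ≫ m = f
  E_of_iso : ∀ {X Y : C} (f : X ⟶ Y), IsIso f → E f
  M_of_iso : ∀ {X Y : C} (f : X ⟶ Y), IsIso f → M f
  E_iso_comp : ∀ {X Y Z : C} (i : X ⟶ Y) (f : Y ⟶ Z), IsIso i → E f → E (i ≫ f)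
  E_comp_iso : ∀ {X Y Z : C} (f : X ⟶ Y) (i : Y ⟶ Z), IsIso i → E f → E (f ≫ i)
  M_iso_comp : ∀ {X Y Z : C} (i : X ⟶ Y) (f : Y ⟶ Z), IsIso i → M f → M (i ≫ f)
  M_comp_iso : ∀ {X Y Z : C} (f : X ⟶ Y) (i : Y ⟶ Z), IsIso i → M f → M (f ≫ i)
  orth : ∀ {A B X Y : C} (e : A ⟶ B) (m : X ⟶ Y), E e → M m → LeftOrth e m

/-- A factorization system on `C` lifts along the forgetful functor from the
Eilenberg–Moore category of a monad `T` preserving `E`-maps. -/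
theorem factorizationSystem_lift_monad {C : Type u} [Category.{v} C]
    (FS : FactorizationSystem C) (T : Monad C)
    (hT : ∀ {X Y : C} (f : X ⟶ Y), FS.E f → FS.E (T.toFunctor.map f)) :
    ∃ FS' : FactorizationSystem T.Algebra,
      (∀ {A B : T.Algebra} (f : A ⟶ B), FS'.E f ↔ FS.E (T.forget.map f)) ∧
        (∀ {A B : T.Algebra} (f : A ⟶ B), FS'.M f ↔ FS.M (T.forget.map f)) := by
  refine ⟨{
    E := fun {A B} f => FS.E f.f
    M := fun {A B} f => FS.M f.f
    factor := ?_
    E_of_iso := fun {A B} f hf => FS.E_of_iso f.f (by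
      haveI : IsIso f := hf
      exact inferInstanceAs (IsIso (T.forget.map f)))
    M_of_iso := fun {A B} f hf => FS.M_of_iso f.f (by
      haveI : IsIso f := hf
      exact inferInstanceAs (IsIso (T.forget.map f)))
    E_iso_comp := fun {X Y Z} i f hi hf => by
      haveI : IsIso i := hi
      haveI : IsIso (T.forget.map i) := inferInstance
      simpa [Monad.Algebra.comp_f] using FS.E_iso_comp i.f f.f ‹IsIso (T.forget.map i)› hf
    E_comp_iso := fun {X Y Z} f i hi hf => by
      haveI : IsIso i := hi
      haveI : IsIso (T.forget.map i) := inferInstance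
      simpa [Monad.Algebra.comp_f] using FS.E_comp_iso f.f i.f ‹IsIso (T.forget.map i)› hf
    M_iso_comp := fun {X Y Z} i f hi hf => by
      haveI : IsIso i := hi
      haveI : IsIso (T.forget.map i) := inferInstance
      simpa [Monad.Algebra.comp_f] using FS.M_iso_comp i.f f.f ‹IsIso (T.forget.map i)› hf
    M_comp_iso := fun {X Y Z} f i hi hf => by
      haveI : IsIso i := hi
      haveI : IsIso (T.forget.map i) := inferInstance
      simpa [Monad.Algebra.comp_f] using FS.M_comp_iso f.f i.f ‹IsIso (T.forget.map i)› hf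
    orth := ?_ }, fun f => Iff.rfl, fun f => Iff.rfl⟩
  · -- factor
    intro A B f
    obtain ⟨Z, e, m, he, hm, hem⟩ := FS.factor f.f
    have sq : T.toFunctor.map e ≫ (T.toFunctor.map m ≫ B.a) = (A.a ≫ e) ≫ m := by
      rw [← Category.assoc, ← T.toFunctor.map_comp, hem, f.h, ← hem, Category.assoc]
    obtain ⟨z, ⟨hze, hzm⟩, -⟩ := FS.orth (T.toFunctor.map e) m (hT e he) hm
      (A.a ≫ e) (T.toFunctor.map m ≫ B.a) sq
    have hunit : T.η.app Z ≫ z = 𝟙 Z := by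
      obtain ⟨t, -, ht⟩ := FS.orth e m he hm e m rfl
      have h1 : T.η.app Z ≫ z = t := ht _ ⟨by
          have hn := T.η.naturality e
          simp only [Functor.id_map] at hn
          rw [← Category.assoc, hn, Category.assoc, hze,
            ← Category.assoc, A.unit, Category.id_comp], by
          have hn := T.η.naturality m
          simp only [Functor.id_map] at hn
          rw [Category.assoc, hzm, ← Category.assoc, ← hn, Category.assoc, B.unit]
          simp⟩
      have h2 : 𝟙 Z = t := ht _ ⟨Category.comp_id e, Category.id_comp m⟩
      rw [h1, h2]
    have hassoc : T.μ.app Z ≫ z = T.toFunctor.map z ≫ z := by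
      obtain ⟨t, -, ht⟩ := FS.orth (T.toFunctor.map (T.toFunctor.map e)) m
        (hT _ (hT _ he)) hm (T.μ.app A.A ≫ A.a ≫ e)
        (T.toFunctor.map (T.toFunctor.map m) ≫ T.μ.app B.A ≫ B.a) (by
          rw [← Category.assoc, ← T.toFunctor.map_comp, ← T.toFunctor.map_comp, hem,
            ← Category.assoc]
          have := T.μ.naturality f.f
          simp only [Functor.comp_map] at this
          rw [this, Category.assoc, f.h, ← hem]
          simp only [Category.assoc])
      have h1 : T.μ.app Z ≫ z = t := ht _ ⟨by
          have := T.μ.naturality e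
          simp only [Functor.comp_map] at this
          rw [← Category.assoc, this, Category.assoc, hze, ← Category.assoc, A.assoc,
            Category.assoc], by
          rw [Category.assoc, hzm, ← Category.assoc]
          have := T.μ.naturality m
          simp only [Functor.comp_map] at this
          rw [← this, Category.assoc]⟩
      have h2 : T.toFunctor.map z ≫ z = t := ht _ ⟨by
          rw [← Category.assoc, ← T.toFunctor.map_comp, hze, T.toFunctor.map_comp,
            Category.assoc, hze, ← Category.assoc, ← A.assoc, Category.assoc], by
          rw [Category.assoc, hzm, ← Category.assoc, ← T.toFunctor.map_comp, hzm,
            T.toFunctor.map_comp, Category.assoc, ← B.assoc]⟩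
      rw [h1, h2]
    refine ⟨⟨Z, z, hunit, hassoc⟩, ⟨e, hze⟩, ⟨m, hzm.symm⟩, he, hm, ?_⟩
    ext
    exact hem
  · -- orthogonality
    intro A B X Y e m he hm f g hsq
    have hsq' : e.f ≫ g.f = f.f ≫ m.f := by
      have := congrArg Monad.Algebra.Hom.f hsq
      simpa [Monad.Algebra.comp_f] using this
    obtain ⟨t, ⟨ht1, ht2⟩, htu⟩ := FS.orth e.f m.f he hm f.f g.f hsq'
    have htalg : T.toFunctor.map t ≫ X.a = B.a ≫ t := by
      obtain ⟨s, -, hs⟩ := FS.orth (T.toFunctor.map e.f) m.f (hT _ he) hm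
        (A.a ≫ f.f) (T.toFunctor.map g.f ≫ Y.a) (by
          rw [← Category.assoc, ← T.toFunctor.map_comp, hsq', T.toFunctor.map_comp,
            Category.assoc, m.h, ← Category.assoc, f.h, Category.assoc])
      have h1 : B.a ≫ t = s := hs _ ⟨by
          rw [← Category.assoc, e.h, Category.assoc, ht1], by
          rw [Category.assoc, ht2, g.h]⟩
      have h2 : T.toFunctor.map t ≫ X.a = s := hs _ ⟨by
          rw [← Category.assoc, ← T.toFunctor.map_comp, ht1, f.h], by
          rw [Category.assoc, ← m.h, ← Category.assoc, ← T.toFunctor.map_comp, ht2]⟩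
      rw [h1, h2]
    refine ⟨⟨t, htalg⟩, ⟨?_, ?_⟩, ?_⟩
    · ext; exact ht1
    · ext; exact ht2
    · intro t' ⟨h1', h2'⟩
      ext
      exact htu t'.f ⟨by simpa [Monad.Algebra.comp_f] using congrArg Monad.Algebra.Hom.f h1',
        by simpa [Monad.Algebra.comp_f] using congrArg Monad.Algebra.Hom.f h2'⟩
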